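/- arXiv:2406.15802 — 3 statements merged into one kernel-verified Lean document; each statement's English description precedes it below -/
import Mathlib

section
/- Let k and m be natural numbers with 1 ≤ k ≤ 2, and let Q be a k × m matrix over GF(2) whose columns are pairwise distinct, all nonzero, and none equal to a standard basis vector of GF(2)^k. Then there exists a nonzero message u ∈ GF(2)^k such that the systematic codeword (u, u·Q) has total Hamming weight wt(u) + wt(u·Q) at most 2; in particular, the systematic code generated by [I_k | Q] has minimum Hamming weight at most 2. -/
lemma zmod2_cases : ∀ x : ZMod 2, x = 0 ∨ x = 1 := by decide

lemma hn_le_card {n : ℕ} (f : Fin n → ZMod 2) : hammingNorm f ≤ n := by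
  classical
  simpa [hammingNorm] using Finset.card_filter_le (Finset.univ : Finset (Fin n)) (fun i => f i ≠ 0)

/-- If `1 ≤ k ≤ 2` and `Q` is a `k × m` matrix over GF(2) whose columns are
pairwise distinct, all nonzero, and none equal to a standard basis vector, then some
nonzero message `u` yields a systematic codeword `(u, u·Q)` of total Hamming weight at
most 2; i.e. the code generated by `[I_k | Q]` has minimum Hamming weight at most 2. -/
theorem stmt_0 (k m : ℕ) (hk1 : 1 ≤ k) (hk2 : k ≤ 2)
    (Q : Matrix (Fin k) (Fin m) (ZMod 2))
    (hdistinct : ∀ j j' : Fin m, j ≠ j' → (fun i => Q i j) ≠ (fun i => Q i j'))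
    (hnonzero : ∀ j : Fin m, (fun i => Q i j) ≠ 0)
    (hnotbasis : ∀ (j : Fin m) (i : Fin k), (fun i' => Q i' j) ≠ Pi.single i 1) :
    ∃ u : Fin k → ZMod 2, u ≠ 0 ∧
      hammingNorm u + hammingNorm (Matrix.vecMul u Q) ≤ 2 := by
  interval_cases k
  · -- k = 1
    have hm : m = 0 := by
      by_contra hm
      have hj : 0 < m := Nat.pos_of_ne_zero hm
      set j : Fin m := ⟨0, hj⟩
      rcases zmod2_cases (Q 0 j) with h | h
      · exact hnonzero j (by funext i; fin_cases i; simpa using h)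
      · exact hnotbasis j 0 (by funext i; fin_cases i; simpa using h)
    subst hm
    refine ⟨(Pi.single 0 1 : _ → ZMod 2), ?_, ?_⟩
    · intro h
      have := congrFun h 0
      simp at this
    · have h1 : hammingNorm ((Pi.single 0 1 : Fin 1 → ZMod 2)) = 1 := by decide
      have h2 : hammingNorm (Matrix.vecMul ((Pi.single 0 1 : Fin 1 → ZMod 2)) Q) ≤ 0 := hn_le_card _
      omega
  · -- k = 2
    have hcol : ∀ j : Fin m, ∀ i : Fin 2, Q i j = 1 := by
      intro j
      rcases zmod2_cases (Q 0 j) with h0 | h0 <;> rcases zmod2_cases (Q 1 j) with h1 | h1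
      · exact absurd (by funext i; fin_cases i <;> simpa) (hnonzero j)
      · exact absurd (by funext i; fin_cases i <;>
          simp [Pi.single_apply, h0, h1]) (hnotbasis j 1)
      · exact absurd (by funext i; fin_cases i <;>
          simp [Pi.single_apply, h0, h1]) (hnotbasis j 0)
      · intro i; fin_cases i <;> assumption
    have hm : m ≤ 1 := by
      by_contra hm
      push_neg at hm
      have h01 : (⟨0, by omega⟩ : Fin m) ≠ ⟨1, by omega⟩ := by
        simp [Fin.ext_iff]
      exact hdistinct _ _ h01 (by funext i; rw [hcol _ i, hcol _ i])
    refine ⟨(Pi.single 0 1 : _ → ZMod 2), ?_, ?_⟩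
    · intro h
      have := congrFun h 0
      simp at this
    · have h1 : hammingNorm ((Pi.single 0 1 : Fin 2 → ZMod 2)) = 1 := by decide
      have h2 : hammingNorm (Matrix.vecMul ((Pi.single 0 1 : Fin 2 → ZMod 2)) Q) ≤ m :=
        hn_le_card _
      omega
end

section
/- Let k ≥ 2 and m ≤ 2 be natural numbers, and let Q be a k × m matrix over GF(2) such that every row of Q has Hamming weight at least 2. Then there exists a nonzero message u ∈ GF(2)^k such that the systematic codeword (u, u·Q) has total Hamming weight wt(u) + wt(u·Q) at most 2; in particular, the systematic code generated by [I_k | Q] has minimum Hamming weight at most 2. -/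
/-- If `k ≥ 2`, `m ≤ 2`, and every row of the `k × m` GF(2) matrix `Q` has
Hamming weight at least 2, then some nonzero message `u` yields a systematic codeword
`(u, u·Q)` of total Hamming weight at most 2; i.e. the code generated by `[I_k | Q]`
has minimum Hamming weight at most 2. -/
theorem stmt_1 (k m : ℕ) (hk : 2 ≤ k) (hm : m ≤ 2)
    (Q : Matrix (Fin k) (Fin m) (ZMod 2))
    (hrows : ∀ i : Fin k, 2 ≤ hammingNorm (Q i)) :
    ∃ u : Fin k → ZMod 2, u ≠ 0 ∧
      hammingNorm u + hammingNorm (Matrix.vecMul u Q) ≤ 2 := by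
  set i0 : Fin k := ⟨0, by omega⟩ with hi0
  set i1 : Fin k := ⟨1, by omega⟩ with hi1
  have h0 : i0 ≠ i1 := by simp [hi0, hi1, Fin.ext_iff]
  -- All entries of Q are 1 (since m ≤ 2 and each row has weight ≥ 2, so m = 2 and all entries nonzero)
  have hall : ∀ i j, Q i j = 1 := by
    intro i j
    have hle : hammingNorm (Q i) ≤ m := by
      simpa using (hammingNorm_le_card_fintype (x := Q i))
    have hmeq : m = 2 := le_antisymm hm (le_trans (hrows i) hle)
    by_contra hne
    have hz : Q i j = 0 := by
      have h01 : ∀ x : ZMod 2, x = 0 ∨ x = 1 := by decide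
      rcases h01 (Q i j) with h | h
      · exact h
      · exact absurd h hne
    -- then weight ≤ m - 1 < 2, contradiction
    have : hammingNorm (Q i) ≤ 1 := by
      have : ({x | Q i x ≠ 0} : Finset (Fin m)) ⊆ Finset.univ.erase j := by
        intro x hx
        simp only [Finset.mem_filter, Finset.mem_univ, true_and, Set.mem_setOf_eq] at hx ⊢
        refine Finset.mem_erase.mpr ⟨fun hxy => ?_, Finset.mem_univ x⟩
        exact (by simpa [hxy, hz] using hx)
      calc hammingNorm (Q i) ≤ (Finset.univ.erase j).card := Finset.card_le_card this
        _ = m - 1 := by simp [Finset.card_erase_of_mem]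
        _ ≤ 1 := by omega
    have h2 := hrows i
    omega
  -- take u with ones at positions 0 and 1
  refine ⟨fun i => if i = i0 ∨ i = i1 then 1 else 0, ?_, ?_⟩
  · intro h
    have := congrFun h i0
    simp at this
  · have hu : hammingNorm (fun i : Fin k => if i = i0 ∨ i = i1 then (1 : ZMod 2) else 0) ≤ 2 := by
      have : ({i | (if i = i0 ∨ i = i1 then (1 : ZMod 2) else 0) ≠ 0} : Finset (Fin k))
          ⊆ {i0, i1} := by
        intro x hx
        simp only [Finset.mem_filter, ne_eq, ite_eq_right_iff, one_ne_zero] at hx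
        by_contra hc
        simp only [Finset.mem_insert, Finset.mem_singleton, not_or] at hc
        exact hx.2 (fun h => by tauto)
      calc hammingNorm _ ≤ ({i0, i1} : Finset (Fin k)).card := Finset.card_le_card this
        _ ≤ 2 := Finset.card_insert_le _ _ |>.trans (by simp)
    have hv : Matrix.vecMul (fun i : Fin k => if i = i0 ∨ i = i1 then (1 : ZMod 2) else 0) Q = 0 := by
      funext j
      simp only [Matrix.vecMul, dotProduct]
      rw [show (fun i : Fin k => (if i = i0 ∨ i = i1 then (1:ZMod 2) else 0) * Q i j)
          = fun i : Fin k => if i = i0 ∨ i = i1 then 1 else 0 by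
        funext i; split <;> simp [hall]]
      have hs : (∑ i : Fin k, if i = i0 ∨ i = i1 then (1 : ZMod 2) else 0)
          = ∑ _i ∈ Finset.univ ∩ ({i0, i1} : Finset (Fin k)), (1 : ZMod 2) := by
        rw [← Finset.sum_ite_mem]
        exact Finset.sum_congr rfl (fun x _ => by simp)
      rw [hs]
      rw [Finset.univ_inter, Finset.sum_const, Finset.card_insert_of_notMem (by simp [h0]),
        Finset.card_singleton]
      show (2 : ℕ) • (1 : ZMod 2) = (0 : Fin m → ZMod 2) j
      simp
      decide
    rw [hv, hammingNorm_zero]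
    simpa using hu
end

section
/- Let Q_I be a k1 × m1 matrix and Q_II a k2 × m2 matrix over GF(2), and let Q be the (k1+k2) × (m1+m2) block-diagonal matrix with blocks Q_I and Q_II, with parity-check matrix H = [Qᵀ | I_{m1+m2}]. Suppose the syndrome map (e_a, e_p) ↦ e_a·Q_I + e_p is injective on the set of pairs (e_a, e_p) ∈ GF(2)^{k1} × GF(2)^{m1} with wt(e_a) + wt(e_p) ≤ 1, and likewise the map (e_b, e_q) ↦ e_b·Q_II + e_q is injective on pairs with wt(e_b) + wt(e_q) ≤ 1. Then the full syndrome map e ↦ e·Hᵀ is injective on the set of error vectors e = (e_a, e_b, e_p, e_q) ∈ GF(2)^{k1+k2+m1+m2} satisfying both wt(e_a) + wt(e_p) ≤ 1 and wt(e_b) + wt(e_q) ≤ 1; i.e., any simultaneous combination of at most one bit error among the Type I coordinates and at most one bit error among the Type II coordinates is uniquely determined by the syndrome. -/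
open Matrix

/-! The parity-check matrix of `diag(Q_I, Q_II)` is block diagonal up to a permutation of
coordinates, so the syndrome of `(e_a, e_b, e_p, e_q)` is the pair of syndromes
`(e_a·Q_I + e_p, e_b·Q_II + e_q)`. Equal syndromes therefore give equal syndromes in each
block, and the two single-error hypotheses recover `(e_a, e_p)` and `(e_b, e_q)` separately. -/

section Syndrome

variable {R κ μ κ₁ κ₂ μ₁ μ₂ : Type*} [Semiring R]

theorem vecMul_transpose_fromCols_one [Fintype κ] [Fintype μ] [DecidableEq μ]
    (Q : Matrix κ μ R) (e : κ ⊕ μ → R) :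
    e ᵥ* (fromCols Qᵀ 1)ᵀ = (e ∘ Sum.inl) ᵥ* Q + e ∘ Sum.inr := by
  rw [transpose_fromCols, transpose_transpose, transpose_one, vecMul_fromRows, vecMul_one]

theorem vecMul_transpose_fromCols_fromBlocks_one [Fintype κ₁] [Fintype κ₂] [Fintype μ₁]
    [Fintype μ₂] [DecidableEq μ₁] [DecidableEq μ₂]
    (A : Matrix κ₁ μ₁ R) (D : Matrix κ₂ μ₂ R) (e : (κ₁ ⊕ κ₂) ⊕ (μ₁ ⊕ μ₂) → R) :
    e ᵥ* (fromCols (fromBlocks A 0 0 D)ᵀ 1)ᵀ =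
      Sum.elim ((fun i => e (.inl (.inl i))) ᵥ* A + fun j => e (.inr (.inl j)))
        ((fun i => e (.inl (.inr i))) ᵥ* D + fun j => e (.inr (.inr j))) := by
  rw [vecMul_transpose_fromCols_one, vecMul_fromBlocks]
  ext (j | j) <;> simp [Function.comp_def]

end Syndrome

/-- For the block-diagonal `Q = diag(Q_I, Q_II)` over GF(2) with parity-check
matrix `H = [Qᵀ | I]`: if the block syndrome map `(e_a, e_p) ↦ e_a·Q_I + e_p` is injective
on pairs of total Hamming weight at most 1, and likewise for `(e_b, e_q) ↦ e_b·Q_II + e_q`,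
then the full syndrome map `e ↦ e·Hᵀ` is injective on the set of error vectors
`e = (e_a, e_b, e_p, e_q)` with `wt(e_a) + wt(e_p) ≤ 1` and `wt(e_b) + wt(e_q) ≤ 1`. -/
theorem stmt_9 (k1 k2 m1 m2 : ℕ)
    (QI : Matrix (Fin k1) (Fin m1) (ZMod 2))
    (QII : Matrix (Fin k2) (Fin m2) (ZMod 2))
    (hI : Set.InjOn
      (fun ep : (Fin k1 → ZMod 2) × (Fin m1 → ZMod 2) => Matrix.vecMul ep.1 QI + ep.2)
      {ep | hammingNorm ep.1 + hammingNorm ep.2 ≤ 1})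
    (hII : Set.InjOn
      (fun eq : (Fin k2 → ZMod 2) × (Fin m2 → ZMod 2) => Matrix.vecMul eq.1 QII + eq.2)
      {eq | hammingNorm eq.1 + hammingNorm eq.2 ≤ 1}) :
    Set.InjOn
      (fun e : (Fin k1 ⊕ Fin k2) ⊕ (Fin m1 ⊕ Fin m2) → ZMod 2 =>
        Matrix.vecMul e
          (Matrix.fromCols ((Matrix.fromBlocks QI 0 0 QII)ᵀ)
            (1 : Matrix (Fin m1 ⊕ Fin m2) (Fin m1 ⊕ Fin m2) (ZMod 2)))ᵀ)
      {e | hammingNorm (fun i => e (Sum.inl (Sum.inl i)))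
              + hammingNorm (fun j => e (Sum.inr (Sum.inl j))) ≤ 1 ∧
           hammingNorm (fun i => e (Sum.inl (Sum.inr i)))
              + hammingNorm (fun j => e (Sum.inr (Sum.inr j))) ≤ 1} := by
  intro e he f hf hef
  simp only [vecMul_transpose_fromCols_fromBlocks_one, Sum.elim_eq_iff] at hef
  obtain ⟨hsynI, hsynII⟩ := hef
  obtain ⟨ha, hp⟩ := Prod.ext_iff.mp (hI (x₁ := (_, _)) he.1 (x₂ := (_, _)) hf.1 hsynI)
  obtain ⟨hb, hq⟩ := Prod.ext_iff.mp (hII (x₁ := (_, _)) he.2 (x₂ := (_, _)) hf.2 hsynII)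
  ext ((i | i) | (j | j))
  exacts [congrFun ha i, congrFun hb i, congrFun hp j, congrFun hq j]
end
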